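/- arXiv:1003.4612 — 2 statements merged into one kernel-verified Lean document; each statement's English description precedes it below -/
import Mathlib

section
/- Let u be a linear functional on real polynomials satisfying D(φu) = ψu (derivative case), and define the Sobolev bilinear form ⟨p, r⟩_S = ⟨u, pr⟩ + λ⟨u, p'r'⟩ and the operator 𝒥r = φr + λ(φ' − ψ)r' − λφr''. Then ⟨(ψ − φ')p, r⟩_S = ⟨Du, p·𝒥r⟩ for all polynomials p, r, where ⟨Du, f⟩ = −⟨u, f'⟩. -/
/-! After moving everything to one side, the identity is a polynomial identity modulo terms
`ψq + φq'` (with `q = pr` and `q = λpr''`), and `u` kills these by the Pearson equation. -/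

open Polynomial

namespace Polynomial

variable {R : Type*} [CommRing R]

noncomputable def sobolevJ (φ ψ : R[X]) (lam : R) (r : R[X]) : R[X] :=
  φ * r + C lam * (derivative φ - ψ) * derivative r - C lam * φ * derivative (derivative r)

/-- `⟨ψu − D(φu), q⟩ = ⟨u, pearsonTerm φ ψ q⟩`. -/
noncomputable def pearsonTerm (φ ψ q : R[X]) : R[X] :=
  ψ * q + φ * derivative q

theorem map_pearsonTerm_eq_zero (u : R[X] →ₗ[R] R) {φ ψ : R[X]}
    (heq : ∀ r : R[X], -(u (φ * derivative r)) = u (ψ * r)) (q : R[X]) :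
    u (pearsonTerm φ ψ q) = 0 := by
  rw [pearsonTerm, map_add, ← heq, neg_add_cancel]

theorem sobolev_add_derivative_mul_sobolevJ (φ ψ p r : R[X]) (lam : R) :
    (ψ - derivative φ) * p * r + lam • (derivative ((ψ - derivative φ) * p) * derivative r)
        + derivative (p * sobolevJ φ ψ lam r) =
      pearsonTerm φ ψ (p * r) - lam • pearsonTerm φ ψ (p * derivative (derivative r)) := by
  simp only [sobolevJ, pearsonTerm, smul_eq_C_mul, derivative_mul, derivative_sub,
    derivative_add, derivative_C, zero_mul, zero_add]
  ring

end Polynomial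

theorem sobolev_J_derivative_identity_general (u : Polynomial ℝ →ₗ[ℝ] ℝ)
    (φ ψ : Polynomial ℝ) (lam : ℝ)
    (heq : ∀ r : Polynomial ℝ, -(u (φ * derivative r)) = u (ψ * r)) :
    ∀ p r : Polynomial ℝ,
      u ((ψ - derivative φ) * p * r)
        + lam * u (derivative ((ψ - derivative φ) * p) * derivative r) =
      -(u (derivative (p * (φ * r + C lam * (derivative φ - ψ) * derivative r
          - C lam * φ * derivative (derivative r))))) := by
  intro p r
  have h := congrArg u (sobolev_add_derivative_mul_sobolevJ φ ψ p r lam)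
  simp only [map_add, map_sub, map_smul, smul_eq_mul, map_pearsonTerm_eq_zero u heq,
    mul_zero, sub_zero] at h
  rw [sobolevJ] at h
  linarith

/-- Let u satisfy D(φu) = ψu, with ⟨p, r⟩_S = ⟨u, pr⟩ + λ⟨u, p'r'⟩ and
𝒥r = φr + λ(φ' − ψ)r' − λφr''. Then ⟨(ψ − φ')p, r⟩_S = ⟨Du, p·𝒥r⟩
for all polynomials p, r, where ⟨Du, f⟩ = −⟨u, f'⟩. -/
theorem sobolev_J_derivative_identity (u : Polynomial ℝ →ₗ[ℝ] ℝ)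
    (φ ψ : Polynomial ℝ) (lam : ℝ) (hlam : 0 ≤ lam)
    (heq : ∀ r : Polynomial ℝ, -(u (φ * derivative r)) = u (ψ * r)) :
    ∀ p r : Polynomial ℝ,
      u ((ψ - derivative φ) * p * r)
        + lam * u (derivative ((ψ - derivative φ) * p) * derivative r) =
      -(u (derivative (p * (φ * r + C lam * (derivative φ - ψ) * derivative r
          - C lam * φ * derivative (derivative r))))) :=
  sobolev_J_derivative_identity_general u φ ψ lam heq
end

section
/- Let u be a linear functional on real polynomials satisfying D(φu) = ψu, let λ ≥ 0 and define the Sobolev bilinear form ⟨p, r⟩_S = ⟨u, pr⟩ + λ⟨u, p'r'⟩ and the operator 𝒥r = φr + λ(φ' − ψ)r' − λφr''. Then 𝒥 is symmetric with respect to ⟨·,·⟩_S: for all polynomials p, r one has ⟨𝒥p, r⟩_S = ⟨p, 𝒥r⟩_S. -/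
open Polynomial

/-!
Write `W = r p' - r' p` for the Wronskian. Expanding, `(𝒥p) r - p (𝒥r) = λ φ' W` and
`(𝒥p)' r' - p' (𝒥r)' = -φ' W`, each up to a multiple of some `ψ q + φ q'`, which `u` kills by
the Pearson equation `D(φu) = ψu`. Hence the two parts of `⟨𝒥p, r⟩_S - ⟨p, 𝒥r⟩_S` cancel.
-/

namespace Polynomial

variable {R : Type*} [CommRing R]

theorem derivative_wronskian (a b : R[X]) :
    derivative (wronskian a b) = a * derivative (derivative b) - derivative (derivative a) * b := by
  simp only [wronskian, derivative_sub, derivative_mul]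
  ring

noncomputable def sobolevOp (φ ψ : R[X]) (lam : R) (r : R[X]) : R[X] :=
  φ * r + C lam * (derivative φ - ψ) * derivative r - C lam * φ * derivative (derivative r)

noncomputable def sobolevForm (u : R[X] →ₗ[R] R) (lam : R) (a b : R[X]) : R :=
  u (a * b) + lam * u (derivative a * derivative b)

variable (φ ψ : R[X]) (lam : R)

theorem sobolevOp_mul_sub_mul_sobolevOp (p r : R[X]) :
    sobolevOp φ ψ lam p * r - p * sobolevOp φ ψ lam r =
      C lam * (derivative φ * wronskian r p
        - (ψ * wronskian r p + φ * derivative (wronskian r p))) := by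
  rw [derivative_wronskian]
  simp only [sobolevOp, wronskian]
  ring

theorem derivative_sobolevOp_mul_sub_mul_derivative_sobolevOp (p r : R[X]) :
    derivative (sobolevOp φ ψ lam p) * derivative r
        - derivative p * derivative (sobolevOp φ ψ lam r) =
      -(derivative φ * wronskian r p)
        - C lam * (ψ * wronskian (derivative r) (derivative p)
          + φ * derivative (wronskian (derivative r) (derivative p))) := by
  rw [derivative_wronskian]
  simp only [sobolevOp, wronskian, derivative_sub, derivative_add, derivative_mul, derivative_C,
    zero_mul, zero_add]
  ring

variable {φ ψ}

theorem apply_mul_add_mul_derivative_eq_zero {u : R[X] →ₗ[R] R}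
    (hpearson : ∀ r : R[X], -(u (φ * derivative r)) = u (ψ * r)) (q : R[X]) :
    u (ψ * q + φ * derivative q) = 0 := by
  rw [map_add, ← hpearson, neg_add_cancel]

theorem sobolevForm_sobolevOp_comm {u : R[X] →ₗ[R] R}
    (hpearson : ∀ r : R[X], -(u (φ * derivative r)) = u (ψ * r)) (p r : R[X]) :
    sobolevForm u lam (sobolevOp φ ψ lam p) r = sobolevForm u lam p (sobolevOp φ ψ lam r) := by
  have hC (x : R[X]) : u (C lam * x) = lam * u x := by
    rw [← smul_eq_C_mul, map_smul, smul_eq_mul]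
  have hpart₀ := congrArg u (sobolevOp_mul_sub_mul_sobolevOp φ ψ lam p r)
  have hpart₁ := congrArg u (derivative_sobolevOp_mul_sub_mul_derivative_sobolevOp φ ψ lam p r)
  simp only [map_sub, map_neg, hC, apply_mul_add_mul_derivative_eq_zero hpearson] at hpart₀ hpart₁
  unfold sobolevForm
  linear_combination hpart₀ + lam * hpart₁

end Polynomial

theorem J_symmetric_general (u : Polynomial ℝ →ₗ[ℝ] ℝ) (φ ψ : Polynomial ℝ)
    (lam : ℝ)
    (heq : ∀ r : Polynomial ℝ, -(u (φ * derivative r)) = u (ψ * r)) :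
    ∀ p r : Polynomial ℝ,
      (fun a b : Polynomial ℝ => u (a * b) + lam * u (derivative a * derivative b))
        (φ * p + C lam * (derivative φ - ψ) * derivative p
          - C lam * φ * derivative (derivative p)) r =
      (fun a b : Polynomial ℝ => u (a * b) + lam * u (derivative a * derivative b))
        p (φ * r + C lam * (derivative φ - ψ) * derivative r
          - C lam * φ * derivative (derivative r)) :=
  sobolevForm_sobolevOp_comm lam heq

/-- Let u satisfy D(φu) = ψu, λ ≥ 0, ⟨p, r⟩_S = ⟨u, pr⟩ + λ⟨u, p'r'⟩,
𝒥r = φr + λ(φ' − ψ)r' − λφr''. Then 𝒥 is symmetric with respect to ⟨·,·⟩_S: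
⟨𝒥p, r⟩_S = ⟨p, 𝒥r⟩_S for all polynomials p, r. -/
theorem J_symmetric (u : Polynomial ℝ →ₗ[ℝ] ℝ) (φ ψ : Polynomial ℝ)
    (lam : ℝ) (hlam : 0 ≤ lam)
    (heq : ∀ r : Polynomial ℝ, -(u (φ * derivative r)) = u (ψ * r)) :
    ∀ p r : Polynomial ℝ,
      (fun a b : Polynomial ℝ => u (a * b) + lam * u (derivative a * derivative b))
        (φ * p + C lam * (derivative φ - ψ) * derivative p
          - C lam * φ * derivative (derivative p)) r =
      (fun a b : Polynomial ℝ => u (a * b) + lam * u (derivative a * derivative b))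
        p (φ * r + C lam * (derivative φ - ψ) * derivative r
          - C lam * φ * derivative (derivative r)) :=
  J_symmetric_general u φ ψ lam heq
end
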